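/- If a sequence {x_k} in a real linear n-normed space X converges b-weakly to some x ∈ X, then the sequence of real numbers {‖x_k, b₂, ..., bₙ‖} is bounded. -/

import Mathlib

open Function Filter Topology

/-- An `n`-norm on a real vector space `X` (axioms N1-N4). -/
structure NNorm (n : ℕ) (X : Type*) [AddCommGroup X] [Module ℝ X] where
  toFun : (Fin n → X) → ℝ
  eq_zero_iff : ∀ v : Fin n → X, toFun v = 0 ↔ ¬ LinearIndependent ℝ v
  perm_invariant : ∀ (σ : Equiv.Perm (Fin n)) (v : Fin n → X), toFun (v ∘ σ) = toFun v
  smul_eq : ∀ (α : ℝ) (v : Fin n → X) (i : Fin n),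
      toFun (Function.update v i (α • v i)) = |α| * toFun v
  add_le : ∀ (v : Fin n → X) (i : Fin n) (x y : X),
      toFun (Function.update v i (x + y)) ≤
        toFun (Function.update v i x) + toFun (Function.update v i y)

variable {n : ℕ} {X : Type*} [AddCommGroup X] [Module ℝ X]

/-- The seminorm `x ↦ ‖x, b₂, …, bₙ‖` obtained by fixing the vectors `b` in all slots
but the first. -/
noncomputable def bsem (N : NNorm (n + 1) X) (b : Fin (n + 1) → X) (x : X) : ℝ :=
  N.toFun (Function.update b 0 x)

section Generic

variable {V : Type*} [AddCommGroup V] [Module ℝ V]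

/-- A `b`-linear functional: additive and homogeneous in its first argument. -/
def IsBLinear (T : V → ℝ) : Prop :=
  (∀ x y : V, T (x + y) = T x + T y) ∧ ∀ (k : ℝ) (x : V), T (k • x) = k * T x

/-- A bounded `b`-linear functional with respect to a seminorm `p`. -/
def IsBddBLinearP (p : V → ℝ) (T : V → ℝ) : Prop :=
  IsBLinear T ∧ ∃ M > 0, ∀ x : V, |T x| ≤ M * p x

/-- The norm of a bounded `b`-linear functional with respect to a seminorm `p`. -/
noncomputable def bnormP (p : V → ℝ) (T : V → ℝ) : ℝ :=
  sInf {M : ℝ | 0 < M ∧ ∀ x : V, |T x| ≤ M * p x}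

end Generic

/-- A bounded `b`-linear functional on `X × ⟨b₂⟩ × ⋯ × ⟨bₙ⟩`. -/
def IsBddBLinear (N : NNorm (n + 1) X) (b : Fin (n + 1) → X) (T : X → ℝ) : Prop :=
  IsBddBLinearP (bsem N b) T

/-- The norm of a bounded `b`-linear functional on `X × ⟨b₂⟩ × ⋯ × ⟨bₙ⟩`. -/
noncomputable def bnorm (N : NNorm (n + 1) X) (b : Fin (n + 1) → X) (T : X → ℝ) : ℝ :=
  bnormP (bsem N b) T

/-- Convergence of a sequence in a linear `n`-normed space. -/
def NConv (N : NNorm (n + 1) X) (u : ℕ → X) (x : X) : Prop :=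
  ∀ v : Fin (n + 1) → X,
    Tendsto (fun k => N.toFun (Function.update v 0 (u k - x))) atTop (nhds 0)

/-- A subspace is closed if it contains all limits of its convergent sequences. -/
def IsClosedSub (N : NNorm (n + 1) X) (W : Submodule ℝ X) : Prop :=
  ∀ u : ℕ → X, (∀ k, u k ∈ W) → ∀ x : X, NConv N u x → x ∈ W

/-- `b`-weak convergence of a sequence. -/
def BWeakConv (N : NNorm (n + 1) X) (b : Fin (n + 1) → X) (u : ℕ → X) (x : X) : Prop :=
  ∀ T : X → ℝ, IsBddBLinear N b T →
    Tendsto (fun k => T (u k)) atTop (nhds (T x))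

/-!
Fixing `b₂, …, bₙ` turns the `n`-norm into a seminorm `x ↦ ‖x, b₂, …, bₙ‖` on `X`, and every
continuous linear functional of the resulting seminormed space is a bounded `b`-linear
functional. A `b`-weakly convergent sequence is therefore weakly bounded there; its
image in the bidual is pointwise bounded on the (complete) dual, so it is norm bounded by
Banach–Steinhaus, and the bidual embedding is isometric by Hahn–Banach.
-/

section WeaklyBounded

variable {ι : Type*}

theorem exists_norm_le_of_weakly_bounded {𝕜 E : Type*} [RCLike 𝕜] [SeminormedAddCommGroup E]
    [NormedSpace 𝕜 E] (u : ι → E) (h : ∀ f : StrongDual 𝕜 E, ∃ C, ∀ i, ‖f (u i)‖ ≤ C) :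
    ∃ C, ∀ i, ‖u i‖ ≤ C := by
  obtain ⟨C, hC⟩ := banach_steinhaus (g := fun i => NormedSpace.inclusionInDoubleDual 𝕜 E (u i)) h
  exact ⟨C, fun i => (NormedSpace.inclusionInDoubleDualLi 𝕜).norm_map (u i) ▸ hC i⟩

variable {V : Type*} [AddCommGroup V] [Module ℝ V]

theorem Seminorm.isBddBLinearP_of_abs_le (p : Seminorm ℝ V) (f : V →ₗ[ℝ] ℝ) {C : ℝ}
    (hf : ∀ x, |f x| ≤ C * p x) : IsBddBLinearP p f := by
  refine ⟨⟨f.map_add, f.map_smul⟩, max C 1, by positivity, fun x => ?_⟩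
  exact (hf x).trans (mul_le_mul_of_nonneg_right (le_max_left C 1) (apply_nonneg p x))

theorem Seminorm.exists_le_of_isBddBLinearP_bounded (p : Seminorm ℝ V) (u : ι → V)
    (h : ∀ T, IsBddBLinearP p T → ∃ C, ∀ i, |T (u i)| ≤ C) : ∃ C, ∀ i, p (u i) ≤ C := by
  let : SeminormedAddCommGroup V := p.toAddGroupSeminorm.toSeminormedAddCommGroup
  let : NormedSpace ℝ V := ⟨fun a x => (map_smul_eq_mul p a x).le⟩
  refine exists_norm_le_of_weakly_bounded (𝕜 := ℝ) u fun f => h f ?_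
  exact p.isBddBLinearP_of_abs_le f.toLinearMap fun x => f.le_opNorm x

end WeaklyBounded

section BSeminorm

variable (N : NNorm (n + 1) X) (b : Fin (n + 1) → X)

theorem bsem_add_le (x y : X) : bsem N b (x + y) ≤ bsem N b x + bsem N b y :=
  N.add_le b 0 x y

theorem bsem_smul (a : ℝ) (x : X) : bsem N b (a • x) = |a| * bsem N b x := by
  simpa [bsem, Function.update_idem] using N.smul_eq a (Function.update b 0 x) 0

noncomputable def bSeminorm : Seminorm ℝ X :=
  Seminorm.of (bsem N b) (bsem_add_le N b) (bsem_smul N b)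

end BSeminorm

theorem stmt11_general (N : NNorm (n + 1) X) (b : Fin (n + 1) → X)
    (u : ℕ → X) (x : X)
    (hx : BWeakConv N b u x) :
    ∃ C : ℝ, ∀ k, bsem N b (u k) ≤ C := by
  refine (bSeminorm N b).exists_le_of_isBddBLinearP_bounded u fun T hT => ?_
  obtain ⟨C, hC⟩ := (hx T hT).abs.bddAbove_range
  exact ⟨C, fun k => hC ⟨k, rfl⟩⟩

theorem stmt11 (N : NNorm (n + 1) X) (b : Fin (n + 1) → X)
    (hdim : ↑(n + 1) ≤ Module.rank ℝ X) (u : ℕ → X) (x : X)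
    (hx : BWeakConv N b u x) :
    ∃ C : ℝ, ∀ k, bsem N b (u k) ≤ C :=
  stmt11_general N b u x hx
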